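/- Let Φ be the fixed point starting with 0 of the morphism 0 ↦ 00101, 1 ↦ 11011, and let a, b be coprime positive integers with S(u) = a|u|_0 + b|u|_1. Then all but finitely many natural numbers lie in { S(u) : u a factor of Φ }. -/

import Mathlib

/-- the 5-uniform morphism φ: 0 ↦ 00101, 1 ↦ 11011 (on letters). -/
def phiMap (x : ℕ) : List ℕ := if x = 0 then [0, 0, 1, 0, 1] else [1, 1, 0, 1, 1]

/-- φ applied to a word. -/
def phiL (l : List ℕ) : List ℕ := l.flatMap phiMap

/-- `Phi m` is the `m`-th letter (0-indexed) of the fixed point Φ = φ^ω(0) of φ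
starting with 0: `φ^[m+1]([0])` has length `5^(m+1) > m` and is a prefix of Φ. -/
def Phi (m : ℕ) : ℕ := (phiL^[m + 1] [0]).getD m 0

/-- the length-`n` factor of `w` starting at position `i`. -/
def factorAt (w : ℕ → ℕ) (i n : ℕ) : List ℕ := (List.range n).map (fun j => w (i + j))

/-- `u` is a factor of the infinite word `w`. -/
def IsFactor (w : ℕ → ℕ) (u : List ℕ) : Prop := ∃ i, u = factorAt w i u.length

/-!
The discrepancy `D u = 3|u|₀ - |u|` measures the excess of zeros over their frequency `1/3` in `Φ`;
the incidence matrix of `φ` has eigenvalues `5` and `2`, and indeed `D (φ u) = 2 D u`. Applied to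
prefixes this gives `D ≥ 2^k + 2` on the prefixes of length `n ≥ 2·5^k`; applied to factors,
starting from `11110`, it gives for every `n ≥ 2` a factor of length `n` with `D ≤ -2`. Sliding a
window changes its number of zeros by at most one, so every `x` with `n ≤ 3x ≤ n + 2^k` is the
number of zeros of some factor of length `n`.

Given a large `m`, pick `z < a + 2b` with `a + 2b ∣ m + bz` (`b` is invertible mod `a + 2b`) and put
`(a + 2b) x = m + bz`, `n = 3x - z`: a factor of length `n` with `x` zeros has `2x - z` ones, and
`a x + b (2x - z) = m`.
-/

lemma List.IsPrefix.getD {α : Type*} {l₁ l₂ : List α} (h : l₁ <+: l₂) {i : ℕ} (hi : i < l₁.length)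
    (d : α) : l₁.getD i d = l₂.getD i d := by
  rw [List.getD_eq_getElem _ _ hi, List.getD_eq_getElem _ _ (hi.trans_le h.length_le),
    h.getElem]

lemma length_phiMap (x : ℕ) : (phiMap x).length = 5 := by
  unfold phiMap; split <;> rfl

lemma phiL_cons (x : ℕ) (l : List ℕ) : phiL (x :: l) = phiMap x ++ phiL l := by
  simp [phiL]

lemma phiL_append (l₁ l₂ : List ℕ) : phiL (l₁ ++ l₂) = phiL l₁ ++ phiL l₂ := by
  simp [phiL]

lemma length_phiL (l : List ℕ) : (phiL l).length = 5 * l.length := by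
  induction l with
  | nil => rfl
  | cons x l ih => rw [phiL_cons, List.length_append, ih, length_phiMap, List.length_cons]; ring

lemma getD_phiL (l : List ℕ) {N r : ℕ} (hN : N < l.length) (hr : r < 5) :
    (phiL l).getD (5 * N + r) 0 = (phiMap (l.getD N 0)).getD r 0 := by
  induction l generalizing N with
  | nil => simp at hN
  | cons x l ih =>
    rw [phiL_cons]
    cases N with
    | zero =>
      rw [Nat.mul_zero, Nat.zero_add, List.getD_append _ _ _ _ (by rw [length_phiMap]; exact hr),
        List.getD_cons_zero]
    | succ N =>
      rw [show 5 * (N + 1) + r = (phiMap x).length + (5 * N + r) by rw [length_phiMap]; ring,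
        List.getD_append_right _ _ _ _ (by omega), Nat.add_sub_cancel_left,
        ih (by simpa using hN), List.getD_cons_succ]

lemma phiL_prefix_phiL {l₁ l₂ : List ℕ} (h : l₁ <+: l₂) : phiL l₁ <+: phiL l₂ := by
  obtain ⟨t, rfl⟩ := h
  exact ⟨phiL t, (phiL_append l₁ t).symm⟩

lemma iterate_phiL_prefix_iterate_phiL {l₁ l₂ : List ℕ} (h : l₁ <+: l₂) (k : ℕ) :
    phiL^[k] l₁ <+: phiL^[k] l₂ := by
  induction k with
  | zero => exact h
  | succ k ih => simpa only [Function.iterate_succ_apply'] using phiL_prefix_phiL ih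

lemma length_iterate_phiL (k : ℕ) : (phiL^[k] [0]).length = 5 ^ k := by
  induction k with
  | zero => rfl
  | succ k ih => rw [Function.iterate_succ_apply', length_phiL, ih, pow_succ, mul_comm]

lemma zero_prefix_iterate_phiL (k : ℕ) : [0] <+: phiL^[k] [0] := by
  induction k with
  | zero => exact List.prefix_refl _
  | succ k ih =>
    rw [Function.iterate_succ_apply']
    exact List.IsPrefix.trans ⟨[0, 1, 0, 1], rfl⟩ (phiL_prefix_phiL ih)

lemma iterate_phiL_zero_prefix_of_le {k l : ℕ} (h : k ≤ l) : phiL^[k] [0] <+: phiL^[l] [0] := by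
  obtain ⟨j, rfl⟩ := Nat.exists_eq_add_of_le h
  rw [Function.iterate_add_apply]
  exact iterate_phiL_prefix_iterate_phiL (zero_prefix_iterate_phiL j) k

lemma Phi_eq_getD_iterate_phiL {k m : ℕ} (h : m < 5 ^ k) : Phi m = (phiL^[k] [0]).getD m 0 := by
  have hm : m < 5 ^ (m + 1) :=
    (Nat.lt_pow_self (by norm_num)).trans (Nat.pow_lt_pow_succ (by norm_num))
  rw [Phi, (iterate_phiL_zero_prefix_of_le (le_max_left (m + 1) k)).getD
      (by rwa [length_iterate_phiL]),
    (iterate_phiL_zero_prefix_of_le (le_max_right (m + 1) k)).getD (by rwa [length_iterate_phiL])]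

lemma Phi_five_mul_add (N : ℕ) {r : ℕ} (hr : r < 5) :
    Phi (5 * N + r) = (phiMap (Phi N)).getD r 0 := by
  have hN : N < 5 ^ N := Nat.lt_pow_self (by norm_num)
  rw [Phi_eq_getD_iterate_phiL hN, Phi_eq_getD_iterate_phiL (k := N + 1) (by rw [pow_succ]; omega),
    Function.iterate_succ_apply', getD_phiL _ (by rwa [length_iterate_phiL]) hr]

lemma Phi_le_one (m : ℕ) : Phi m ≤ 1 := by
  have hr : m % 5 < 5 := Nat.mod_lt m (by norm_num)
  rw [← Nat.div_add_mod m 5, Phi_five_mul_add _ hr]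
  unfold phiMap
  split <;> interval_cases m % 5 <;> simp

lemma length_factorAt (w : ℕ → ℕ) (i n : ℕ) : (factorAt w i n).length = n := by
  simp [factorAt]

lemma factorAt_add (w : ℕ → ℕ) (i m n : ℕ) :
    factorAt w i (m + n) = factorAt w i m ++ factorAt w (i + m) n := by
  simp [factorAt, List.range_add, add_assoc]

lemma take_factorAt (w : ℕ → ℕ) (i n r : ℕ) : (factorAt w i n).take r = factorAt w i (min r n) := by
  simp [factorAt, ← List.map_take, List.take_range]

lemma factorAt_Phi_eq_take_drop {k i n : ℕ} (h : i + n ≤ 5 ^ k) :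
    factorAt Phi i n = ((phiL^[k] [0]).drop i).take n := by
  refine List.ext_getElem (by simp [length_factorAt, length_iterate_phiL]; omega) fun j hj _ => ?_
  rw [length_factorAt] at hj
  simp only [factorAt, List.getElem_map, List.getElem_range, List.getElem_take, List.getElem_drop]
  rw [Phi_eq_getD_iterate_phiL (k := k) (by omega), List.getD_eq_getElem]

lemma factorAt_Phi_five_mul_five (N : ℕ) : factorAt Phi (5 * N) 5 = phiMap (Phi N) := by
  refine List.ext_getElem (by rw [length_factorAt, length_phiMap]) fun r hr _ => ?_
  rw [length_factorAt] at hr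
  simp only [factorAt, List.getElem_map, List.getElem_range]
  rw [Phi_five_mul_add N hr, List.getD_eq_getElem]

lemma factorAt_Phi_five_mul (i n : ℕ) : factorAt Phi (5 * i) (5 * n) = phiL (factorAt Phi i n) := by
  induction n with
  | zero => rfl
  | succ n ih =>
    rw [mul_add, mul_one, factorAt_add, ih, ← mul_add, factorAt_Phi_five_mul_five, factorAt_add,
      phiL_append]
    simp [factorAt, phiL]

def discrepancy (u : List ℕ) : ℤ := 3 * u.count 0 - u.length

lemma discrepancy_append (u v : List ℕ) :
    discrepancy (u ++ v) = discrepancy u + discrepancy v := by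
  simp only [discrepancy, List.count_append, List.length_append]; push_cast; ring

lemma discrepancy_phiL (u : List ℕ) : discrepancy (phiL u) = 2 * discrepancy u := by
  induction u with
  | nil => rfl
  | cons x u ih =>
    rw [phiL_cons, discrepancy_append, ih, ← List.singleton_append, discrepancy_append]
    unfold phiMap
    split <;> simp_all [discrepancy] <;> ring

lemma neg_two_le_discrepancy_take_phiMap (x r : ℕ) : -2 ≤ discrepancy ((phiMap x).take r) := by
  unfold phiMap
  split <;> rcases r with _ | _ | _ | _ | _ | r <;> simp [discrepancy]

lemma discrepancy_factorAt_add (w : ℕ → ℕ) (i m n : ℕ) :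
    discrepancy (factorAt w i (m + n)) =
      discrepancy (factorAt w i m) + discrepancy (factorAt w (i + m) n) := by
  rw [factorAt_add, discrepancy_append]

lemma discrepancy_factorAt_Phi_five_mul (i n : ℕ) :
    discrepancy (factorAt Phi (5 * i) (5 * n)) = 2 * discrepancy (factorAt Phi i n) := by
  rw [factorAt_Phi_five_mul, discrepancy_phiL]

lemma neg_two_le_discrepancy_factorAt_Phi_five_mul (i : ℕ) {r : ℕ} (hr : r ≤ 5) :
    -2 ≤ discrepancy (factorAt Phi (5 * i) r) := by
  rw [← min_eq_left hr, ← take_factorAt, factorAt_Phi_five_mul_five]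
  exact neg_two_le_discrepancy_take_phiMap _ _

lemma two_mul_discrepancy_prefix_div_five_sub_two_le (n : ℕ) :
    2 * discrepancy (factorAt Phi 0 (n / 5)) - 2 ≤ discrepancy (factorAt Phi 0 n) := by
  have hdrop := neg_two_le_discrepancy_factorAt_Phi_five_mul (n / 5) (Nat.mod_lt n (by norm_num)).le
  rw [← Nat.div_add_mod n 5, discrepancy_factorAt_add, Nat.zero_add, ← Nat.mul_zero 5,
    discrepancy_factorAt_Phi_five_mul, Nat.mul_zero, Nat.mul_add_div (by norm_num),
    Nat.mod_div_self, Nat.add_zero]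
  linarith

lemma three_le_discrepancy_prefix {n : ℕ} (hn : 2 ≤ n) : 3 ≤ discrepancy (factorAt Phi 0 n) := by
  induction n using Nat.strong_induction_on with
  | _ n ih =>
    by_cases h10 : n < 10
    · interval_cases n <;> rw [factorAt_Phi_eq_take_drop (k := 2) (by norm_num)] <;> decide
    · have := ih (n / 5) (by omega) (by omega)
      have := two_mul_discrepancy_prefix_div_five_sub_two_le n
      linarith

lemma two_pow_add_two_le_discrepancy_prefix {k n : ℕ} (hn : 2 * 5 ^ k ≤ n) :
    2 ^ k + 2 ≤ discrepancy (factorAt Phi 0 n) := by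
  induction k generalizing n with
  | zero => simpa using three_le_discrepancy_prefix (by simpa using hn)
  | succ k ih =>
    have := ih (n := n / 5) <|
      (Nat.le_div_iff_mul_le (by norm_num)).mpr (by rw [pow_succ] at hn; linarith)
    have := two_mul_discrepancy_prefix_div_five_sub_two_le n
    rw [pow_succ]
    linarith

lemma discrepancy_factorAt_Phi_le {i n n' d : ℕ} (hd : d ≤ 5) (h : d + n = 5 * n') :
    discrepancy (factorAt Phi (5 * i + d) n) ≤ 2 * discrepancy (factorAt Phi i n') + 2 := by
  have := neg_two_le_discrepancy_factorAt_Phi_five_mul i hd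
  rw [← discrepancy_factorAt_Phi_five_mul, ← h, discrepancy_factorAt_add]
  linarith

lemma exists_discrepancy_factorAt_Phi_le_neg_two {n : ℕ} (hn : 2 ≤ n) :
    ∃ i, discrepancy (factorAt Phi i n) ≤ -2 := by
  induction n using Nat.strong_induction_on with
  | _ n ih =>
    by_cases h6 : n < 6
    · -- `Φ` has the factor `11110` at position 53.
      refine ⟨53, ?_⟩
      interval_cases n <;> rw [factorAt_Phi_eq_take_drop (k := 3) (by norm_num)] <;> decide
    · obtain ⟨i, hi⟩ := ih ((n + 4) / 5) (by omega) (by omega)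
      have := discrepancy_factorAt_Phi_le (i := i) (n := n) (n' := (n + 4) / 5)
        (d := 5 * ((n + 4) / 5) - n) (by omega) (by omega)
      exact ⟨_, by linarith⟩

lemma exists_apply_eq_of_le_apply_succ_add_one {f : ℕ → ℕ} (hf : ∀ k, f k ≤ f (k + 1) + 1)
    {j x : ℕ} (hj : f j ≤ x) (h0 : x ≤ f 0) : ∃ k, f k = x := by
  induction j with
  | zero => exact ⟨0, le_antisymm hj h0⟩
  | succ j ih =>
    by_cases hx : f (j + 1) = x
    · exact ⟨j + 1, hx⟩
    · exact ih (by have := hf j; omega)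

lemma count_factorAt_le_count_factorAt_succ_add_one (w : ℕ → ℕ) (a i n : ℕ) :
    (factorAt w i n).count a ≤ (factorAt w (i + 1) n).count a + 1 := by
  have h := congrArg (List.count a)
    ((factorAt_add w i n 1).symm.trans (add_comm n 1 ▸ factorAt_add w i 1 n))
  have h₁ : (factorAt w i 1).count a ≤ 1 := List.count_le_length.trans_eq (length_factorAt w i 1)
  rw [List.count_append, List.count_append] at h
  omega

lemma count_zero_add_count_one_of_forall_le_one {l : List ℕ} (h : ∀ x ∈ l, x ≤ 1) :
    l.count 0 + l.count 1 = l.length := by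
  induction l with
  | nil => rfl
  | cons x l ih =>
    have hx := h x (List.mem_cons_self ..)
    have := ih fun y hy => h y (List.mem_cons_of_mem x hy)
    interval_cases x <;> simp <;> omega

lemma count_one_factorAt_Phi (i n : ℕ) :
    (factorAt Phi i n).count 1 = n - (factorAt Phi i n).count 0 := by
  have := count_zero_add_count_one_of_forall_le_one (l := factorAt Phi i n) fun x hx => by
    obtain ⟨j, -, rfl⟩ := List.mem_map.mp hx
    exact Phi_le_one _
  rw [length_factorAt] at this
  omega

lemma exists_count_zero_factorAt_Phi_eq {k n x : ℕ} (hn : 2 * 5 ^ k ≤ n) (hlo : n ≤ 3 * x)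
    (hhi : 3 * x ≤ n + 2 ^ k) : ∃ i, (factorAt Phi i n).count 0 = x := by
  obtain ⟨j, hj⟩ := exists_discrepancy_factorAt_Phi_le_neg_two (n := n)
    (by have := Nat.one_le_pow k 5 (by norm_num); omega)
  have h0 := two_pow_add_two_le_discrepancy_prefix hn
  simp only [discrepancy, length_factorAt] at hj h0
  refine exists_apply_eq_of_le_apply_succ_add_one
    (f := fun i => (factorAt Phi i n).count 0) (j := j)
    (fun i => count_factorAt_le_count_factorAt_succ_add_one Phi 0 i n) (by omega) ?_
  have : ((2 ^ k : ℕ) : ℤ) = 2 ^ k := by norm_num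
  omega

lemma exists_lt_dvd_add_mul {b s : ℕ} (c : ℕ) (hbs : b.Coprime s) (hs : 0 < s) :
    ∃ z < s, s ∣ c + b * z := by
  have : NeZero s := ⟨hs.ne'⟩
  refine ⟨(-(c : ZMod s) * ((ZMod.unitOfCoprime b hbs)⁻¹ : (ZMod s)ˣ)).val, ZMod.val_lt _, ?_⟩
  rw [← ZMod.natCast_eq_zero_iff]
  push_cast [ZMod.natCast_zmod_val]
  have : (b : ZMod s) * ((ZMod.unitOfCoprime b hbs)⁻¹ : (ZMod s)ˣ) = 1 := by
    rw [← ZMod.coe_unitOfCoprime b hbs, Units.mul_inv]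
  linear_combination (-(c : ZMod s)) * this

theorem Phi_frobenius_property_general (a b : ℕ) (hco : Nat.Coprime a b) :
    {m : ℕ | ¬ ∃ u : List ℕ, IsFactor Phi u ∧ m = a * u.count 0 + b * u.count 1}.Finite := by
  set s := a + 2 * b
  have hs : 0 < s := by
    by_contra h
    obtain ⟨rfl, rfl⟩ : a = 0 ∧ b = 0 := by omega
    simp at hco
  refine Filter.eventually_cofinite.mp ?_
  rw [Nat.cofinite_eq_atTop, Filter.eventually_atTop]
  refine ⟨s * (2 * 5 ^ s + s), fun m hm => ?_⟩
  obtain ⟨z, hzs, x, hx⟩ :=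
    exists_lt_dvd_add_mul m ((Nat.coprime_add_mul_right_right b a 2).mpr hco.symm) hs
  have hx_big : 2 * 5 ^ s + s ≤ x :=
    Nat.le_of_mul_le_mul_left ((hm.trans (Nat.le_add_right m (b * z))).trans_eq hx) hs
  obtain ⟨i, hi⟩ := exists_count_zero_factorAt_Phi_eq (k := s) (n := 3 * x - z) (x := x)
    (by omega) (by omega) (by have := Nat.lt_two_pow_self (n := s); omega)
  refine ⟨factorAt Phi i (3 * x - z), ⟨i, by rw [length_factorAt]⟩, ?_⟩
  rw [count_one_factorAt_Phi, hi, show 3 * x - z - x = 2 * x - z by omega]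
  zify [(by omega : z ≤ 2 * x)]
  have : (m : ℤ) + b * z = (a + 2 * b) * x := by exact_mod_cast hx
  linear_combination this

/-- Φ has the Frobenius property: for coprime positive `a`, `b`, all but finitely many
naturals are of the form `a * |u|₀ + b * |u|₁` for a factor `u` of Φ. -/
theorem Phi_frobenius_property (a b : ℕ) (ha : 0 < a) (hb : 0 < b)
    (hco : Nat.Coprime a b) :
    {m : ℕ | ¬ ∃ u : List ℕ, IsFactor Phi u ∧ m = a * u.count 0 + b * u.count 1}.Finite :=
  Phi_frobenius_property_general a b hco
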